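/- Let γ : I → X be locally of bounded variation, let t ∈ I be a point at which γ is not right-continuous, and let b ∈ I with t < b. Then Var(γ;[t,b)) = Var(γ;(t,b)) + d(γ(t),γ(t+)), where d(γ(t),γ(t+)) denotes the (existing) limit lim_{s↘t} d(γ(t),γ(s)); in particular Var(γ;[t,b)) > Var(γ;(t,b)) + Var(γ;{t}). -/

import Mathlib

/-!
The jump of `γ` at `t` is measured in the completion of `X`: there the function has bounded
variation near `t`, hence a right limit `l`, and the variation on `[t, b)` exceeds that on
`(t, b)` by exactly `d(γ t, l)`. The embedding into the completion is isometric, so neither the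
variations nor the distances `d(γ t, γ s)` change, and `d(γ t, l) > 0` because `γ` is not
right-continuous at `t`.
-/

open Filter Topology Set

theorem Isometry.eVariationOn_comp {α E F : Type*} [LinearOrder α] [PseudoEMetricSpace E]
    [PseudoEMetricSpace F] {φ : E → F} (hφ : Isometry φ) (f : α → E) (s : Set α) :
    eVariationOn (φ ∘ f) s = eVariationOn f s := by
  simp only [eVariationOn, Function.comp_apply, hφ.edist_eq]

theorem BoundedVariationOn.exists_tendsto_dist_and_eVariationOn_inter_Ici_eq
    {α E : Type*} [LinearOrder α] [TopologicalSpace α] [OrderTopology α] [PseudoMetricSpace E]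
    {f : α → E} {s : Set α} {a : α} (hf : BoundedVariationOn f s) (ha : a ∈ s)
    (h : (𝓝[s ∩ Ioi a] a).NeBot) :
    ∃ L : ℝ, Tendsto (fun y ↦ dist (f a) (f y)) (𝓝[s ∩ Ioi a] a) (𝓝 L) ∧
      eVariationOn f (s ∩ Ici a) = eVariationOn f (s ∩ Ioi a) + ENNReal.ofReal L := by
  set ι : E → UniformSpace.Completion E := (↑)
  have hι : Isometry ι := UniformSpace.Completion.coe_isometry
  have hιf : BoundedVariationOn (ι ∘ f) s := by
    rwa [BoundedVariationOn, hι.eVariationOn_comp]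
  obtain ⟨l, hl⟩ := hιf.exists_tendsto_right a
  refine ⟨dist (ι (f a)) l, ?_, ?_⟩
  · simpa only [Function.comp_apply, hι.dist_eq] using (tendsto_const_nhds (x := ι (f a))).dist hl
  · rw [← hι.eVariationOn_comp, ← hι.eVariationOn_comp,
      eVariationOn.eVariationOn_on_inter_Ici_eq_Ioi_add_edist h ha hl, Function.comp_apply,
      edist_dist]

/-- If `γ` is locally of bounded variation, `t ∈ I` is a point where `γ` is
not right-continuous, and `b ∈ I` with `t < b`, then the limit
`d(γ(t),γ(t+)) = lim_{s↘t} d(γ(t),γ(s))` exists,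
`Var(γ;[t,b)) = Var(γ;(t,b)) + d(γ(t),γ(t+))`, and in particular
`Var(γ;[t,b)) > Var(γ;(t,b)) + Var(γ;{t})`. -/
theorem variation_not_additive_right {X : Type*} [MetricSpace X]
    (I : Set ℝ) (hI : I.OrdConnected) (γ : ℝ → X)
    (hγ : ∀ a ∈ I, ∀ b ∈ I, a ≤ b → eVariationOn γ (Set.Icc a b) < ⊤)
    (t : ℝ) (ht : t ∈ I)
    (hdisc : ¬ ContinuousWithinAt γ (I ∩ Set.Ioi t) t)
    (b : ℝ) (hb : b ∈ I) (htb : t < b) :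
    ∃ L : ℝ,
      Tendsto (fun s => dist (γ t) (γ s)) (𝓝[I ∩ Set.Ioi t] t) (𝓝 L) ∧
      eVariationOn γ (Set.Ico t b) = eVariationOn γ (Set.Ioo t b) + ENNReal.ofReal L ∧
      eVariationOn γ (Set.Ioo t b) + eVariationOn γ ({t} : Set ℝ)
        < eVariationOn γ (Set.Ico t b) := by
  have hIoo : Ioo t b ⊆ I ∩ Ioi t := fun x hx => ⟨hI.out ht hb (Ioo_subset_Icc_self hx), hx.1⟩
  have hnhds : 𝓝[I ∩ Ioi t] t = 𝓝[>] t :=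
    le_antisymm (nhdsWithin_mono _ inter_subset_right)
      ((nhdsWithin_Ioo_eq_nhdsGT htb).symm.trans_le (nhdsWithin_mono _ hIoo))
  have hIco : Ico t b ∩ Ioi t = Ioo t b := by
    ext x
    simp only [mem_inter_iff, mem_Ico, mem_Ioi, mem_Ioo]
    grind
  have hbv : BoundedVariationOn γ (Ico t b) :=
    ((eVariationOn.mono γ Ico_subset_Icc_self).trans_lt (hγ t ht b hb htb.le)).ne
  obtain ⟨L, hL, hvar⟩ := hbv.exists_tendsto_dist_and_eVariationOn_inter_Ici_eq
    (left_mem_Ico.2 htb) (by rw [hIco, nhdsWithin_Ioo_eq_nhdsGT htb]; infer_instance)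
  rw [Ico_inter_Ici, max_self, hIco] at hvar
  rw [hIco, nhdsWithin_Ioo_eq_nhdsGT htb] at hL
  have hLpos : 0 < L := by
    refine (ge_of_tendsto' hL fun _ => dist_nonneg).lt_of_ne' fun hL0 => hdisc ?_
    rw [ContinuousWithinAt, hnhds, tendsto_iff_dist_tendsto_zero]
    simpa only [dist_comm, hL0] using hL
  refine ⟨L, hnhds ▸ hL, hvar, ?_⟩
  rw [hvar, eVariationOn.subsingleton γ subsingleton_singleton, add_zero]
  exact ENNReal.lt_add_right (hbv.mono Ioo_subset_Ico_self) (ENNReal.ofReal_pos.2 hLpos).ne'
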